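/- Define g(ω, τ) = 2cos(2πω)·(1/(1+e^{−τ})) · (1 + (1/(1+e^{−τ})²)) / (1 − 1/(1+e^{−τ})⁴). Then for all ω with 0 < ω ≤ 0.02 and all τ ≥ 3, g(ω, τ) > 0.991. -/
import Mathlib


open Real

theorem stmt9 (ω τ : ℝ) (hω : 0 < ω) (hω2 : ω ≤ 0.02) (hτ : 3 ≤ τ) :
    2 * Real.cos (2 * π * ω) * (1 / (1 + Real.exp (-τ))) *
        (1 + 1 / (1 + Real.exp (-τ))^2) / (1 - 1 / (1 + Real.exp (-τ))^4) > 0.991 := by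
  set x := Real.exp (-τ) with hxdef
  have hx0 : 0 < x := Real.exp_pos _
  have he1 : (2.7182818283 : ℝ) < Real.exp 1 := Real.exp_one_gt_d9
  have hx1 : x < 0.05 := by
    have h3 : (20 : ℝ) < Real.exp 3 := by
      have : Real.exp 3 = Real.exp 1 * Real.exp 1 * Real.exp 1 := by
        rw [← Real.exp_add, ← Real.exp_add]; norm_num
      nlinarith [Real.exp_pos 1]
    have hmon : x ≤ Real.exp (-3) := Real.exp_le_exp.mpr (by linarith)
    have hrw : Real.exp (-3) = 1 / Real.exp 3 := by
      rw [Real.exp_neg]; field_simp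
    rw [hrw] at hmon
    have h4 : x * Real.exp 3 ≤ 1 := by
      rw [le_div_iff₀ (Real.exp_pos 3)] at hmon; linarith
    nlinarith
  have hpi : π < 3.15 := by linarith [Real.pi_lt_d2]
  have hpi0 : 0 < π := Real.pi_pos
  have hc : (0.99 : ℝ) ≤ Real.cos (2 * π * ω) := by
    have hb : 1 - (2 * π * ω) ^ 2 / 2 ≤ Real.cos (2 * π * ω) :=
      Real.one_sub_sq_div_two_le_cos
    have h1 : 0 < 2 * π * ω := by positivity
    have h2 : 2 * π * ω ≤ 2 * 3.15 * 0.02 := by nlinarith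
    nlinarith
  have hy0 : (0 : ℝ) < 1 + x := by linarith
  have hpow : (1 : ℝ) < (1 + x) ^ 4 := by nlinarith [sq_nonneg x, sq_nonneg (x*x)]
  have h4pos : (0 : ℝ) < (1 + x) ^ 4 := by positivity
  have hD : (0 : ℝ) < 1 - 1 / (1 + x) ^ 4 := by
    rw [sub_pos, div_lt_one h4pos]; linarith
  have hD1 : 1 - 1 / (1 + x) ^ 4 < 1 := by
    have : (0:ℝ) < 1 / (1 + x) ^ 4 := by positivity
    linarith
  have hinv : (0.95 : ℝ) ≤ 1 / (1 + x) := by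
    rw [le_div_iff₀ hy0]; nlinarith
  have hsq : (0.9 : ℝ) ≤ 1 / (1 + x) ^ 2 := by
    rw [le_div_iff₀ (by positivity : (0:ℝ) < (1+x)^2)]; nlinarith
  rw [gt_iff_lt, lt_div_iff₀ hD]
  have hc0 : (0:ℝ) ≤ Real.cos (2 * π * ω) := by linarith
  have h1 : (0.9405 : ℝ) ≤ Real.cos (2 * π * ω) * (1 / (1 + x)) := by
    nlinarith [mul_le_mul hc hinv (by norm_num) hc0]
  have h2 : (1.9 : ℝ) ≤ 1 + 1 / (1 + x) ^ 2 := by linarith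
  have hbig : (3.5 : ℝ) ≤ 2 * Real.cos (2 * π * ω) * (1 / (1 + x)) * (1 + 1 / (1 + x) ^ 2) := by
    nlinarith [mul_le_mul h1 h2 (by norm_num) (by linarith : (0:ℝ) ≤ Real.cos (2 * π * ω) * (1 / (1 + x)))]
  nlinarith
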